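/- Let k₁, ..., k_{N+1} be real constants and b₁, ..., b_{N+1} real numbers such that v(x) := Σ_{i=1}^{N+1} b_i exp(k_i x) is nonvanishing on an open interval I. Define u(x) = -v'(x)/v(x) on I. Then u satisfies M(1) = 0 on I, where M = ∏_{j=1}^{N+1}(D - k_j - u) is the composition of the first-order operators (D - k_j - u(x)) applied to the constant function 1. -/

import Mathlib

/-- Composition of the first-order operators `(D - a - u)` for `a` in the list,
the head operator being applied last. -/
noncomputable def applyT (u : ℝ → ℝ) : List ℝ → (ℝ → ℝ) → (ℝ → ℝ)
  | [], w => w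
  | a :: as, w => fun x => deriv (applyT u as w) x - (a + u x) * applyT u as w x

/-- Pure differential operator product `∏ (D - a)`. -/
noncomputable def pureT : List ℝ → (ℝ → ℝ) → (ℝ → ℝ)
  | [], w => w
  | a :: as, w => fun x => deriv (pureT as w) x - a * pureT as w x

/-- Exponential sum. -/
noncomputable def expSum {n : ℕ} (k c : Fin n → ℝ) : ℝ → ℝ :=
  fun x => ∑ i, c i * Real.exp (k i * x)

lemma expSum_hasDerivAt {n : ℕ} (k c : Fin n → ℝ) (x : ℝ) :
    HasDerivAt (expSum k c) (expSum k (fun i => k i * c i) x) x := by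
  have h : HasDerivAt (fun y => ∑ i : Fin n, c i * Real.exp (k i * y))
      (∑ i : Fin n, c i * (Real.exp (k i * x) * k i)) x := by
    apply HasDerivAt.fun_sum
    intro i _
    have h1 : HasDerivAt (fun y : ℝ => k i * y) (k i) x := by
      simpa using (hasDerivAt_id x).const_mul (k i)
    exact ((Real.hasDerivAt_exp (k i * x)).comp x h1).const_mul (c i)
  have : (∑ i : Fin n, c i * (Real.exp (k i * x) * k i))
      = expSum k (fun i => k i * c i) x := by
    unfold expSum
    exact Finset.sum_congr rfl fun i _ => by ring
  rw [this] at h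
  exact h

lemma expSum_deriv {n : ℕ} (k c : Fin n → ℝ) (x : ℝ) :
    deriv (expSum k c) x = expSum k (fun i => k i * c i) x :=
  (expSum_hasDerivAt k c x).deriv

lemma pureT_expSum {n : ℕ} (k : Fin n → ℝ) (L : List ℝ) (c : Fin n → ℝ) :
    pureT L (expSum k c)
      = expSum k (fun i => (L.map (fun a => k i - a)).prod * c i) := by
  induction L with
  | nil => simp [pureT, expSum]
  | cons a as ih =>
    funext x
    show deriv (pureT as (expSum k c)) x - a * pureT as (expSum k c) x = _
    rw [ih, expSum_deriv]
    unfold expSum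
    rw [Finset.mul_sum, ← Finset.sum_sub_distrib]
    refine Finset.sum_congr rfl fun i _ => ?_
    simp only [List.map_cons, List.prod_cons]
    ring

theorem stmt_7 (N : ℕ) (k : Fin (N + 1) → ℝ) (b : Fin (N + 1) → ℝ)
    (p q : ℝ) (v : ℝ → ℝ)
    (hv : ∀ x, v x = ∑ i, b i * Real.exp (k i * x))
    (hvne : ∀ x ∈ Set.Ioo p q, v x ≠ 0)
    (u : ℝ → ℝ) (hu : ∀ x ∈ Set.Ioo p q, u x = -(deriv v x) / v x) :
    ∀ x ∈ Set.Ioo p q, applyT u (List.ofFn k) (fun _ => (1 : ℝ)) x = 0 := by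
  have hveq : v = expSum k b := funext fun x => hv x
  -- expSum representation of pureT L v
  have hrep : ∀ L : List ℝ, pureT L v
      = expSum k (fun i => (L.map (fun a => k i - a)).prod * b i) := by
    intro L; rw [hveq]; exact pureT_expSum k L b
  -- differentiability of pureT L v everywhere, with derivative
  have hder : ∀ (L : List ℝ) (x : ℝ),
      HasDerivAt (pureT L v) (deriv (pureT L v) x) x := by
    intro L x
    rw [hrep L]
    exact ((expSum_hasDerivAt k _ x)).congr_deriv
      (by rw [← hrep L, hrep L, (expSum_hasDerivAt k _ x).deriv])
  -- bridge lemma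
  have bridge : ∀ L : List ℝ, ∀ x ∈ Set.Ioo p q,
      applyT u L (fun _ => (1 : ℝ)) x = pureT L v x / v x := by
    intro L
    induction L with
    | nil =>
      intro x hx
      show (1 : ℝ) = v x / v x
      rw [div_self (hvne x hx)]
    | cons a as ih =>
      intro x hx
      have hvx := hvne x hx
      have hEq : applyT u as (fun _ => (1 : ℝ)) =ᶠ[nhds x]
          fun y => pureT as v y / v y := by
        filter_upwards [isOpen_Ioo.mem_nhds hx] with y hy using ih y hy
      have hPd : HasDerivAt (pureT as v) (deriv (pureT as v) x) x := hder as x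
      have hvd : HasDerivAt v (deriv v x) x := hder [] x
      have hq : HasDerivAt (fun y => pureT as v y / v y)
          ((deriv (pureT as v) x * v x - pureT as v x * deriv v x) / (v x)^2) x :=
        hPd.div hvd hvx
      have hderiv : deriv (applyT u as (fun _ => (1 : ℝ))) x
          = (deriv (pureT as v) x * v x - pureT as v x * deriv v x) / (v x)^2 := by
        rw [hEq.deriv_eq]; exact hq.deriv
      show deriv (applyT u as (fun _ => (1:ℝ))) x
          - (a + u x) * applyT u as (fun _ => (1:ℝ)) x = _
      rw [hderiv, ih x hx, hu x hx]
      show _ = (deriv (pureT as v) x - a * pureT as v x) / v x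
      field_simp
      ring
  intro x hx
  rw [bridge (List.ofFn k) x hx, hrep (List.ofFn k)]
  have : expSum k (fun i => ((List.ofFn k).map (fun a => k i - a)).prod * b i) x = 0 := by
    unfold expSum
    refine Finset.sum_eq_zero fun i _ => ?_
    have h0 : (0 : ℝ) ∈ (List.ofFn k).map (fun a => k i - a) := by
      exact List.mem_map.mpr ⟨k i, List.mem_ofFn.mpr ⟨i, rfl⟩, by ring⟩
    simp only []
    rw [List.prod_eq_zero h0, zero_mul, zero_mul]
  rw [this, zero_div]
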